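/- Under Assumption (A), for each coordinate i and each T > 0, sup_{t∈[0,T]} | X^{(n),i}_t − n^{−1/2} X^i_{τ_{κ(nt)}} | → 0 in probability as n → ∞. -/

import Mathlib

open MeasureTheory ProbabilityTheory Filter Finset
open scoped ENNReal Topology

noncomputable section

/-- Tensor product of two vectors in `ℝ^d`, viewed as a `d × d` matrix. -/
def tens {d : ℕ} (x y : Fin d → ℝ) : Fin d × Fin d → ℝ := fun ij => x ij.1 * y ij.2

/-- Transpose of a matrix indexed by `Fin d × Fin d`. -/
def transp {d : ℕ} (A : Fin d × Fin d → ℝ) : Fin d × Fin d → ℝ := fun ij => A (ij.2, ij.1)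

/-- Antisymmetric part of a matrix: `Antisym(A) = ½ (A − Aᵀ)`. -/
def antisym {d : ℕ} (A : Fin d × Fin d → ℝ) : Fin d × Fin d → ℝ :=
  (2⁻¹ : ℝ) • (A - transp A)

/-- Discrete Stratonovich iterated sum
`I^Str_{M,N}(X) = Σ_{k=M+1}^N (X_{M,k-1} ⊗ X_{k-1,k} − ½ X_{k-1,k} ⊗ X_{k-1,k})`. -/
def IStr {d : ℕ} (X : ℕ → Fin d → ℝ) (M N : ℕ) : Fin d × Fin d → ℝ :=
  ∑ k ∈ Finset.Icc (M + 1) N,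
    (tens (X (k - 1) - X M) (X k - X (k - 1))
      - (2⁻¹ : ℝ) • tens (X k - X (k - 1)) (X k - X (k - 1)))

/-- Diffusively rescaled linear interpolation
`X^{(n)}_t = n^{-1/2} X_{⌊nt⌋} + n^{-1/2}(nt − ⌊nt⌋)(X_{⌊nt⌋+1} − X_{⌊nt⌋})`. -/
def interp {E : Type*} [AddCommGroup E] [Module ℝ E] (X : ℕ → E) (n : ℕ) (t : ℝ) : E :=
  (Real.sqrt n)⁻¹ • X ⌊(n : ℝ) * t⌋₊ +
    (((n : ℝ) * t - ⌊(n : ℝ) * t⌋₊) / Real.sqrt n) • (X (⌊(n : ℝ) * t⌋₊ + 1) - X ⌊(n : ℝ) * t⌋₊)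

/-- Rescaled interpolated second-level (iterated-sum) process `𝕏^{(n)}_{s,t}`. -/
def interp2 {d : ℕ} (X : ℕ → Fin d → ℝ) (n : ℕ) (s t : ℝ) : Fin d × Fin d → ℝ :=
  ((n : ℝ))⁻¹ • IStr X ⌊(n : ℝ) * s⌋₊ ⌊(n : ℝ) * t⌋₊ +
    (((n : ℝ) * (t - s) - ⌊(n : ℝ) * t⌋₊ + ⌊(n : ℝ) * s⌋₊) / n) •
      (IStr X ⌊(n : ℝ) * s⌋₊ (⌊(n : ℝ) * t⌋₊ + 1) - IStr X ⌊(n : ℝ) * s⌋₊ ⌊(n : ℝ) * t⌋₊)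

/-- `p`-variation norm on `[0,T]` of a one-parameter path, with values in `ℝ≥0∞`. -/
def pVar {E : Type*} [SeminormedAddGroup E] (p T : ℝ) (f : ℝ → E) : ℝ≥0∞ :=
  (⨆ (m : ℕ) (t : ℕ → ℝ) (_ : Monotone t) (_ : t 0 = 0) (_ : t m = T),
    ∑ i ∈ Finset.range m, (‖f (t (i + 1)) - f (t i)‖₊ : ℝ≥0∞) ^ p) ^ p⁻¹

/-- `q`-variation norm on `[0,T]` of a two-parameter increment process `F = (F_{s,t})`. -/
def pVar2 {E : Type*} [SeminormedAddGroup E] (q T : ℝ) (F : ℝ → ℝ → E) : ℝ≥0∞ :=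
  (⨆ (m : ℕ) (t : ℕ → ℝ) (_ : Monotone t) (_ : t 0 = 0) (_ : t m = T),
    ∑ i ∈ Finset.range m, (‖F (t i) (t (i + 1))‖₊ : ℝ≥0∞) ^ q) ^ q⁻¹

/-- Regeneration interval `T_k = τ_{k+1} − τ_k`. -/
def regInt {Ω : Type*} (τ : ℕ → Ω → ℕ) (k : ℕ) (ω : Ω) : ℕ := τ (k + 1) ω - τ k ω

/-- The `k`-th regeneration block: the pair consisting of `T_k` and the increment path
`(X_{τ_k, τ_k + m})_{0 ≤ m ≤ T_k}` (frozen after time `T_k`). -/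
def block {Ω : Type*} {d : ℕ} (X : ℕ → Ω → (Fin d → ℝ)) (τ : ℕ → Ω → ℕ) (k : ℕ) (ω : Ω) :
    ℕ × (ℕ → Fin d → ℝ) :=
  (regInt τ k ω, fun m => X (τ k ω + min m (regInt τ k ω)) ω - X (τ k ω) ω)

/-- `Ξ_m^i = max{|X^i_{τ_m, τ_m + k}| : 0 ≤ k ≤ T_m}`. -/
def XiC {Ω : Type*} {d : ℕ} (X : ℕ → Ω → (Fin d → ℝ)) (τ : ℕ → Ω → ℕ) (i : Fin d)
    (m : ℕ) (ω : Ω) : ℝ :=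
  (Finset.range (regInt τ m ω + 1)).sup' Finset.nonempty_range_add_one
    (fun k => |X (τ m ω + k) ω i - X (τ m ω) ω i|)

/-- Euclidean norm `|Ξ_m|` of the vector `Ξ_m = (Ξ_m^1, …, Ξ_m^d)`. -/
def XiNorm {Ω : Type*} {d : ℕ} (X : ℕ → Ω → (Fin d → ℝ)) (τ : ℕ → Ω → ℕ)
    (m : ℕ) (ω : Ω) : ℝ :=
  Real.sqrt (∑ i : Fin d, XiC X τ i m ω ^ 2)

/-- Delayed regenerative increments: `τ₀ = 0`, the `τ_k` are strictly increasing, all data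
is measurable, the regeneration blocks form an independent family, and the blocks with
index `k ≥ 1` are identically distributed (hence i.i.d. and independent of the initial
block). -/
structure DelayedRegenerative {Ω : Type*} [MeasurableSpace Ω] (P : Measure Ω) {d : ℕ}
    (X : ℕ → Ω → (Fin d → ℝ)) (τ : ℕ → Ω → ℕ) : Prop where
  tau_zero : ∀ ω, τ 0 ω = 0
  tau_mono : ∀ ω, StrictMono fun k => τ k ω
  meas_X : ∀ k, Measurable (X k)
  meas_tau : ∀ k, Measurable (τ k)
  indep : iIndepFun (block X τ) P
  ident : ∀ k : ℕ, 1 ≤ k → IdentDistrib (block X τ k) (block X τ 1) P P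

/-- Assumption (A): for every coordinate `i`, every `m ∈ {0,1}` and `q ∈ {0,2}`,
`0 < E[(Ξ_m^i)^q T_m] < ∞`. -/
def AssumptionA {Ω : Type*} [MeasurableSpace Ω] (P : Measure Ω) {d : ℕ}
    (X : ℕ → Ω → (Fin d → ℝ)) (τ : ℕ → Ω → ℕ) : Prop :=
  ∀ i : Fin d, ∀ m ∈ ({0, 1} : Set ℕ), ∀ q ∈ ({0, 2} : Set ℕ),
    Integrable (fun ω => XiC X τ i m ω ^ q * (regInt τ m ω : ℝ)) P ∧
      0 < ∫ ω, XiC X τ i m ω ^ q * (regInt τ m ω : ℝ) ∂P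

/-- Centering: `E[X_{τ_k, τ_{k+1}}] = 0` (componentwise, with integrability) for `k ≥ 1`. -/
def Centered {Ω : Type*} [MeasurableSpace Ω] (P : Measure Ω) {d : ℕ}
    (X : ℕ → Ω → (Fin d → ℝ)) (τ : ℕ → Ω → ℕ) : Prop :=
  ∀ k : ℕ, 1 ≤ k → ∀ i : Fin d,
    Integrable (fun ω => X (τ (k + 1) ω) ω i - X (τ k ω) ω i) P ∧
      ∫ ω, (X (τ (k + 1) ω) ω i - X (τ k ω) ω i) ∂P = 0

/-!
At time `t` the interpolated path lies between two observations inside the regeneration block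
`κ(nt)`, so its distance to the skeleton value `n^{-1/2} X_{τ_{κ(nt)}}` is at most
`n^{-1/2} Ξ_{κ(nt)}`. Since `κ(nt) ≤ τ_{κ(nt)} ≤ nT`, a large deviation forces one of
`Ξ_0, …, Ξ_{⌊nT⌋}` to exceed `ε√n`. The blocks after the first are identically distributed,
so the union bound gives `P(Ξ_0 ≥ ε√n) + nT·P(Ξ_1 ≥ ε√n)`. Finally `n·P(Ξ_m ≥ ε√n) → 0`
because `Ξ_m² ≤ Ξ_m² T_m` is integrable and `c·P(Y ≥ c) ≤ E[Y; Y ≥ c] → 0` for integrable `Y ≥ 0`.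
-/

section Interpolation

theorem interp_apply {ι E : Type*} [AddCommGroup E] [Module ℝ E] (Z : ℕ → ι → E) (n : ℕ)
    (t : ℝ) (i : ι) : interp Z n t i = interp (fun k => Z k i) n t := by
  simp [interp]

theorem norm_interp_sub_smul_le {E : Type*} [NormedAddCommGroup E] [NormedSpace ℝ E]
    (z : ℕ → E) {n c r : ℕ} {t M : ℝ} (hc : (c : ℝ) ≤ n * t) (hr : (n : ℝ) * t < c + r)
    (hM : ∀ a, c ≤ a → a ≤ c + r → ‖z a - z c‖ ≤ M) :
    ‖interp z n t - (Real.sqrt n)⁻¹ • z c‖ ≤ (Real.sqrt n)⁻¹ * M := by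
  have hu : 0 ≤ (n : ℝ) * t := (Nat.cast_nonneg c).trans hc
  set a := ⌊(n : ℝ) * t⌋₊
  set θ := (n : ℝ) * t - a
  have hθ0 : 0 ≤ θ := sub_nonneg.mpr (Nat.floor_le hu)
  have hθ1 : θ ≤ 1 := by have := Nat.lt_floor_add_one ((n : ℝ) * t); linarith
  have hca : c ≤ a := Nat.le_floor hc
  have hac : a + 1 ≤ c + r := (Nat.floor_lt hu).mpr (by exact_mod_cast hr)
  have hsplit : interp z n t - (Real.sqrt n)⁻¹ • z c =
      (Real.sqrt n)⁻¹ • ((1 - θ) • (z a - z c) + θ • (z (a + 1) - z c)) := by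
    simp only [interp]
    module
  have hcombo : (1 - θ) • (z a - z c) + θ • (z (a + 1) - z c) ∈ Metric.closedBall 0 M :=
    convex_closedBall (0 : E) M (mem_closedBall_zero_iff.mpr (hM a hca (by omega)))
      (mem_closedBall_zero_iff.mpr (hM (a + 1) (by omega) hac)) (by linarith) hθ0 (by ring)
  rw [hsplit, norm_smul, Real.norm_of_nonneg (by positivity)]
  exact mul_le_mul_of_nonneg_left (mem_closedBall_zero_iff.mp hcombo) (by positivity)

end Interpolation

section Tail

variable {α : Type*} [MeasurableSpace α] {μ : Measure α}

theorem tendsto_mul_measureReal_ge_atTop {f : α → ℝ} (hfm : Measurable f)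
    (hf0 : 0 ≤ᵐ[μ] f) (hf : Integrable f μ) :
    Tendsto (fun c => c * μ.real {x | c ≤ f x}) atTop (𝓝 0) := by
  have hmarkov : ∀ c, c * μ.real {x | c ≤ f x} ≤ ∫ x in {x | c ≤ f x}, f x ∂μ := fun c => by
    simpa [measureReal_restrict_apply_self] using
      mul_meas_ge_le_integral_of_nonneg (μ := μ.restrict {x | c ≤ f x})
        (ae_restrict_of_ae hf0) hf.integrableOn c
  have htail : Tendsto (fun c => ∫ x in {x | c ≤ f x}, f x ∂μ) atTop (𝓝 0) := by
    have hempty : ⋂ c : ℝ, {x | c ≤ f x} = ∅ :=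
      Set.iInter_eq_empty_iff.mpr fun x => ⟨f x + 1, by simp⟩
    simpa [hempty] using tendsto_setIntegral_of_antitone
      (fun c => measurableSet_le measurable_const hfm)
      (fun c c' hcc' x (hx : c' ≤ f x) => hcc'.trans hx) ⟨0, hf.integrableOn⟩
  refine squeeze_zero' ?_ (Eventually.of_forall hmarkov) htail
  filter_upwards [eventually_ge_atTop 0] with c hc using by positivity

theorem tendsto_natCast_mul_measureReal_ge_sqrt [IsFiniteMeasure μ] {Y : α → ℝ}
    (hY : Measurable Y) (hY2 : Integrable (fun x => Y x ^ 2) μ) {ε : ℝ} (hε : 0 < ε) :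
    Tendsto (fun n : ℕ => n * μ.real {x | ε * Real.sqrt n ≤ Y x}) atTop (𝓝 0) := by
  have hc : Tendsto (fun n : ℕ => ε ^ 2 * n) atTop atTop :=
    tendsto_natCast_atTop_atTop.const_mul_atTop (by positivity)
  have hsq := (tendsto_mul_measureReal_ge_atTop (hY.pow_const 2)
    (ae_of_all μ fun x => sq_nonneg (Y x)) hY2).comp hc
  have hbound : ∀ n : ℕ, n * μ.real {x | ε * Real.sqrt n ≤ Y x} ≤
      (ε ^ 2)⁻¹ * (ε ^ 2 * n * μ.real {x | ε ^ 2 * n ≤ Y x ^ 2}) := fun n => by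
    have hsub : {x | ε * Real.sqrt n ≤ Y x} ⊆ {x | ε ^ 2 * n ≤ Y x ^ 2} :=
      fun x (hx : ε * Real.sqrt n ≤ Y x) => by
      have := pow_le_pow_left₀ (by positivity) hx 2
      rwa [mul_pow, Real.sq_sqrt (Nat.cast_nonneg n)] at this
    rw [← mul_assoc, ← mul_assoc, inv_mul_cancel₀ (by positivity), one_mul]
    exact mul_le_mul_of_nonneg_left (measureReal_mono hsub) (Nat.cast_nonneg n)
  exact squeeze_zero (fun n => by positivity) hbound (by simpa using hsq.const_mul (ε ^ 2)⁻¹)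

theorem measureReal_biUnion_range_le_of_measureReal_eq (s : ℕ → Set α)
    (hs : ∀ m, μ.real (s (m + 1)) = μ.real (s 1)) (N : ℕ) :
    μ.real (⋃ m ∈ range (N + 1), s m) ≤ μ.real (s 0) + N * μ.real (s 1) := by
  refine (measureReal_biUnion_finset_le _ _).trans (le_of_eq ?_)
  rw [sum_range_succ']
  simp only [hs, sum_const, card_range, nsmul_eq_mul]
  ring

end Tail

section Regeneration

variable {Ω : Type*} [MeasurableSpace Ω] {d : ℕ} {X : ℕ → Ω → (Fin d → ℝ)} {τ : ℕ → Ω → ℕ}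

theorem measurable_apply_randomIndex {E : Type*} [MeasurableSpace E] {Z : ℕ → Ω → E}
    (hZ : ∀ k, Measurable (Z k)) {N : Ω → ℕ} (hN : Measurable N) :
    Measurable fun ω => Z (N ω) ω :=
  (measurable_from_prod_countable_left (f := fun p : Ω × ℕ => Z p.2 p.1) hZ).comp
    (measurable_id.prodMk hN)

theorem measurable_regInt (hτ : ∀ k, Measurable (τ k)) (k : ℕ) : Measurable (regInt τ k) :=
  (hτ (k + 1)).sub (hτ k)

theorem measurable_block (hX : ∀ k, Measurable (X k)) (hτ : ∀ k, Measurable (τ k)) (k : ℕ) :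
    Measurable (block X τ k) := by
  refine (measurable_regInt hτ k).prodMk (measurable_pi_lambda _ fun m => ?_)
  exact (measurable_apply_randomIndex hX
    ((hτ k).add (measurable_const.min (measurable_regInt hτ k)))).sub
    (measurable_apply_randomIndex hX (hτ k))

def blockXi (i : Fin d) (b : ℕ × (ℕ → Fin d → ℝ)) : ℝ :=
  (range (b.1 + 1)).sup' nonempty_range_add_one fun k => |b.2 k i|

theorem measurable_blockXi (i : Fin d) : Measurable (blockXi i) := by
  have h : Measurable fun b : (ℕ → Fin d → ℝ) × ℕ =>
      (range (b.2 + 1)).sup' nonempty_range_add_one fun k => |b.1 k i| :=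
    measurable_from_prod_countable_left fun _ => measurable_range_sup''
      fun k _ => ((measurable_pi_apply i).comp (measurable_pi_apply k)).abs
  exact h.comp measurable_swap

omit [MeasurableSpace Ω] in
theorem XiC_eq_blockXi_block (i : Fin d) (m : ℕ) :
    XiC X τ i m = blockXi i ∘ block X τ m := by
  funext ω
  refine sup'_congr _ rfl fun k hk => ?_
  simp [block, min_eq_left (Nat.lt_succ_iff.mp (mem_range.mp hk))]

theorem identDistrib_XiC {P : Measure Ω} (hreg : DelayedRegenerative P X τ) (i : Fin d)
    {m : ℕ} (hm : 1 ≤ m) : IdentDistrib (XiC X τ i m) (XiC X τ i 1) P P := by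
  simpa only [XiC_eq_blockXi_block] using (hreg.ident m hm).comp (measurable_blockXi i)

theorem measurable_XiC (hX : ∀ k, Measurable (X k)) (hτ : ∀ k, Measurable (τ k)) (i : Fin d)
    (m : ℕ) : Measurable (XiC X τ i m) := by
  rw [XiC_eq_blockXi_block]
  exact (measurable_blockXi i).comp (measurable_block hX hτ m)

omit [MeasurableSpace Ω] in
theorem abs_sub_le_XiC (i : Fin d) (m : ℕ) (ω : Ω) {k : ℕ} (hk : k ≤ regInt τ m ω) :
    |X (τ m ω + k) ω i - X (τ m ω) ω i| ≤ XiC X τ i m ω :=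
  le_sup' (fun k => |X (τ m ω + k) ω i - X (τ m ω) ω i|) (mem_range.mpr (Nat.lt_succ_of_le hk))

theorem integrable_XiC_sq {P : Measure Ω} (hreg : DelayedRegenerative P X τ)
    (hA : AssumptionA P X τ) (i : Fin d) {m : ℕ} (hm : m ∈ ({0, 1} : Set ℕ)) :
    Integrable (fun ω => XiC X τ i m ω ^ 2) P := by
  refine (hA i m hm 2 (by simp)).1.mono'
    ((measurable_XiC hreg.meas_X hreg.meas_tau i m).pow_const 2).aestronglyMeasurable
    (ae_of_all P fun ω => ?_)
  have hT : (1 : ℝ) ≤ regInt τ m ω := by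
    have : τ m ω < τ (m + 1) ω := hreg.tau_mono ω (Nat.lt_succ_self m)
    exact_mod_cast (show 1 ≤ regInt τ m ω by unfold regInt; omega)
  rw [Real.norm_of_nonneg (sq_nonneg _)]
  exact le_mul_of_one_le_right (sq_nonneg _) hT

omit [MeasurableSpace Ω] in
theorem abs_interp_sub_le_XiC (i : Fin d) (ω : Ω) {n m : ℕ} {t : ℝ}
    (hm : (τ m ω : ℝ) ≤ n * t ∧ (n : ℝ) * t < τ (m + 1) ω) :
    |interp (fun k => X k ω) n t i - (Real.sqrt n)⁻¹ * X (τ m ω) ω i| ≤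
      (Real.sqrt n)⁻¹ * XiC X τ i m ω := by
  have hstep : τ (m + 1) ω = τ m ω + regInt τ m ω := by
    have : τ m ω < τ (m + 1) ω := by exact_mod_cast hm.1.trans_lt hm.2
    unfold regInt; omega
  rw [interp_apply, ← smul_eq_mul, ← Real.norm_eq_abs]
  refine norm_interp_sub_smul_le (fun k => X k ω i) hm.1 (by exact_mod_cast hstep ▸ hm.2)
    fun a hca hac => ?_
  simpa [Nat.add_sub_cancel' hca] using
    abs_sub_le_XiC (X := X) (τ := τ) i m ω (k := a - τ m ω) (by omega)

omit [MeasurableSpace Ω] in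
theorem setOf_exists_interp_far_subset (hτ : ∀ ω, StrictMono fun k => τ k ω) (κ : ℝ → Ω → ℕ)
    (hκ : ∀ u : ℝ, 0 ≤ u → ∀ ω, (τ (κ u ω) ω : ℝ) ≤ u ∧ u < τ (κ u ω + 1) ω)
    (T : ℝ) (i : Fin d) {ε : ℝ} (hε : 0 < ε) (n : ℕ) :
    {ω | ∃ t ∈ Set.Icc (0 : ℝ) T, ε ≤
        |interp (fun k => X k ω) n t i - (Real.sqrt n)⁻¹ * X (τ (κ ((n : ℝ) * t) ω) ω) ω i|} ⊆
      ⋃ m ∈ range (⌊(n : ℝ) * T⌋₊ + 1), {ω | ε * Real.sqrt n ≤ XiC X τ i m ω} := by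
  rintro ω ⟨t, ht, hfar⟩
  have hm := hκ (n * t) (by positivity [ht.1]) ω
  have hXi := hfar.trans (abs_interp_sub_le_XiC i ω hm)
  have hsqrt : 0 < Real.sqrt n := by
    rcases Nat.eq_zero_or_pos n with rfl | hn
    · exact (hε.not_ge (by simpa using hXi)).elim
    · positivity
  refine Set.mem_iUnion₂.mpr
    ⟨κ (n * t) ω, mem_range.mpr (Nat.lt_succ_of_le (Nat.le_floor ?_)), ?_⟩
  · calc (κ (n * t) ω : ℝ) ≤ τ (κ (n * t) ω) ω := by exact_mod_cast (hτ ω).le_apply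
      _ ≤ n * t := hm.1
      _ ≤ n * T := by gcongr; exact ht.2
  · rwa [inv_mul_eq_div, le_div_iff₀ hsqrt] at hXi

end Regeneration

/-- under Assumption (A), for each coordinate `i` and each `T > 0`,
`sup_{t∈[0,T]} |X^{(n),i}_t − n^{−1/2} X^i_{τ_{κ(nt)}}| → 0` in probability. -/
theorem interpolation_close_to_regeneration_skeleton {Ω : Type*} [MeasurableSpace Ω]
    (P : Measure Ω) [IsProbabilityMeasure P] {d : ℕ}
    (X : ℕ → Ω → (Fin d → ℝ)) (τ : ℕ → Ω → ℕ)
    (hreg : DelayedRegenerative P X τ) (hA : AssumptionA P X τ)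
    (κ : ℝ → Ω → ℕ)
    (hκ : ∀ u : ℝ, 0 ≤ u → ∀ ω, (τ (κ u ω) ω : ℝ) ≤ u ∧ u < τ (κ u ω + 1) ω)
    (T : ℝ) (hT : 0 < T) (i : Fin d) :
    ∀ ε > (0 : ℝ), Tendsto
      (fun n : ℕ => (P {ω | ∃ t ∈ Set.Icc (0 : ℝ) T, ε ≤
        |interp (fun k => X k ω) n t i -
          (Real.sqrt n)⁻¹ * X (τ (κ ((n : ℝ) * t) ω) ω) ω i|}).toReal)
      atTop (𝓝 0) := by
  intro ε hε
  set s : ℕ → ℕ → Set Ω := fun m n => {ω | ε * Real.sqrt n ≤ XiC X τ i m ω}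
  have htail : ∀ m ∈ ({0, 1} : Set ℕ), Tendsto (fun n : ℕ => n * P.real (s m n)) atTop (𝓝 0) :=
    fun m hm => tendsto_natCast_mul_measureReal_ge_sqrt
      (measurable_XiC hreg.meas_X hreg.meas_tau i m) (integrable_XiC_sq hreg hA i hm) hε
  have hident : ∀ n m, P.real (s (m + 1) n) = P.real (s 1 n) := fun n m =>
    congrArg ENNReal.toReal ((identDistrib_XiC hreg i (Nat.le_add_left 1 m)).measure_mem_eq
      measurableSet_Ici)
  refine squeeze_zero' (Eventually.of_forall fun n => ENNReal.toReal_nonneg) ?_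
    (by simpa using (htail 0 (by simp)).add ((htail 1 (by simp)).const_mul T))
  filter_upwards [eventually_ge_atTop 1] with n hn
  calc P.real _ ≤ P.real (⋃ m ∈ range (⌊(n : ℝ) * T⌋₊ + 1), s m n) :=
        measureReal_mono (setOf_exists_interp_far_subset hreg.tau_mono κ hκ T i hε n)
          (measure_ne_top P _)
    _ ≤ P.real (s 0 n) + ⌊(n : ℝ) * T⌋₊ * P.real (s 1 n) :=
        measureReal_biUnion_range_le_of_measureReal_eq (s · n) (hident n) _
    _ ≤ n * P.real (s 0 n) + (n * T) * P.real (s 1 n) := by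
        gcongr
        · exact le_mul_of_one_le_left measureReal_nonneg (by exact_mod_cast hn)
        · exact Nat.floor_le (by positivity)
    _ = n * P.real (s 0 n) + T * (n * P.real (s 1 n)) := by ring

end
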